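/- arXiv:2208.08715 — 3 statements merged into one kernel-verified Lean document; each statement's English description precedes it below -/
import Mathlib

section
/- Suppose an ontology merging system satisfies commutativity (O1 ∼ O2 iff O2 ∼ O1, and O1⊔O2 = O2⊔O1 whenever defined). Then catenary associativity holds if and only if both weak associativity and representativity hold, where representativity says: if O3 = O1⊔O2 is defined and O ∼ O1, then O ∼ O3, and if O1 ∼ O, then O3 ∼ O. -/
/-- Under commutativity, catenary associativity is equivalent to
weak associativity together with representativity. -/
theorem stmt_2 {α : Type*} (sim : α → α → Prop) (m : α → α → Option α)
    (hdef : ∀ O1 O2 : α, (m O1 O2).isSome ↔ sim O1 O2)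
    (hsymm : ∀ O1 O2 : α, sim O1 O2 ↔ sim O2 O1)
    (hcomm : ∀ O1 O2 : α, sim O1 O2 → m O1 O2 = m O2 O1) :
    (∀ O1 O2 O3 : α, (m O1 O2).isSome → (m O2 O3).isSome →
      ((m O1 O2).bind (fun x => m x O3)).isSome ∧
      ((m O2 O3).bind (fun y => m O1 y)).isSome ∧
      (m O1 O2).bind (fun x => m x O3) = (m O2 O3).bind (fun y => m O1 y))
    ↔
    ((∀ O1 O2 O3 : α,
        ((m O1 O2).bind (fun x => m x O3)).isSome →
        ((m O2 O3).bind (fun y => m O1 y)).isSome →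
        (m O1 O2).bind (fun x => m x O3) = (m O2 O3).bind (fun y => m O1 y)) ∧
     (∀ O1 O2 O3 O : α, m O1 O2 = some O3 →
        (sim O O1 → sim O O3) ∧ (sim O1 O → sim O3 O))) := by
  constructor
  · intro cat
    constructor
    · intro O1 O2 O3 h1 h2
      have hs1 : (m O1 O2).isSome := by
        cases h : m O1 O2 with
        | none => simp [h] at h1
        | some a => simp
      have hs2 : (m O2 O3).isSome := by
        cases h : m O2 O3 with
        | none => simp [h] at h2
        | some a => simp
      exact (cat O1 O2 O3 hs1 hs2).2.2
    · intro O1 O2 O3 O heq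
      have key : sim O O1 → sim O O3 := by
        intro hO
        have h1 : (m O O1).isSome := (hdef O O1).mpr hO
        have h2 : (m O1 O2).isSome := by simp [heq]
        have h := (cat O O1 O2 h1 h2).2.1
        rw [heq] at h
        exact (hdef O O3).mp (by simpa using h)
      exact ⟨key, fun hO => (hsymm O O3).mp (key ((hsymm O1 O).mp hO))⟩
  · rintro ⟨weak, rep⟩ O1 O2 O3 h1 h2
    obtain ⟨a, ha⟩ := Option.isSome_iff_exists.mp h1
    obtain ⟨b, hb⟩ := Option.isSome_iff_exists.mp h2
    have s12 : sim O1 O2 := (hdef O1 O2).mp h1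
    have s23 : sim O2 O3 := (hdef O2 O3).mp h2
    have ha' : m O2 O1 = some a := by rw [← hcomm O1 O2 s12, ha]
    have saO3 : sim a O3 := (rep O2 O1 a O3 ha').2 s23
    have sO1b : sim O1 b := (rep O2 O3 b O1 hb).1 s12
    have hA : ((m O1 O2).bind (fun x => m x O3)).isSome := by
      rw [ha]; simpa using (hdef a O3).mpr saO3
    have hB : ((m O2 O3).bind (fun y => m O1 y)).isSome := by
      rw [hb]; simpa using (hdef O1 b).mpr sO1b
    exact ⟨hA, hB, weak O1 O2 O3 hA hB⟩
end

section
/- Let ∼ be reflexive and symmetric and ⪯ a partial order on an ontology merging system (𝔒, ∼, ⊔) such that defined merges are least upper bounds for ⪯ and ⪯ is compatible with ∼ and ⊔ on both sides. Then the system satisfies weak associativity: whenever (O1⊔O2)⊔O3 and O1⊔(O2⊔O3) are both defined, they are equal. -/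
/-- If defined merges are least upper bounds for a partial order compatible
with aligning and merging on both sides, then weak associativity holds. -/
theorem stmt_7 {α : Type*} (sim : α → α → Prop) (m : α → α → Option α) (le : α → α → Prop)
    (hdef : ∀ O1 O2 : α, (m O1 O2).isSome ↔ sim O1 O2)
    (hrefl : ∀ O : α, sim O O)
    (hsymm : ∀ O1 O2 : α, sim O1 O2 → sim O2 O1)
    (hle_refl : ∀ O : α, le O O)
    (hle_antisymm : ∀ O1 O2 : α, le O1 O2 → le O2 O1 → O1 = O2)
    (hle_trans : ∀ O1 O2 O3 : α, le O1 O2 → le O2 O3 → le O1 O3)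
    (hLU : ∀ O1 O2 O3 : α, m O1 O2 = some O3 →
      le O1 O3 ∧ le O2 O3 ∧ ∀ O : α, le O1 O → le O2 O → le O3 O)
    (hCPl : ∀ O1 O2 O : α, le O1 O2 → sim O O1 →
      sim O O2 ∧ ∀ x y : α, m O O1 = some x → m O O2 = some y → le x y)
    (hCPr : ∀ O1 O2 O : α, le O1 O2 → sim O1 O →
      sim O2 O ∧ ∀ x y : α, m O1 O = some x → m O2 O = some y → le x y) :
    ∀ O1 O2 O3 : α,
      ((m O1 O2).bind (fun x => m x O3)).isSome →
      ((m O2 O3).bind (fun y => m O1 y)).isSome →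
      (m O1 O2).bind (fun x => m x O3) = (m O2 O3).bind (fun y => m O1 y) := by
  intro O1 O2 O3 h1 h2
  obtain ⟨a, ha⟩ : ∃ a, m O1 O2 = some a := by
    cases hma : m O1 O2 with
    | none => simp [hma] at h1
    | some a => exact ⟨a, rfl⟩
  obtain ⟨L, hL⟩ : ∃ L, m a O3 = some L := by
    rw [ha] at h1; simpa [Option.isSome_iff_exists] using h1
  obtain ⟨b, hb⟩ : ∃ b, m O2 O3 = some b := by
    cases hmb : m O2 O3 with
    | none => simp [hmb] at h2
    | some b => exact ⟨b, rfl⟩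
  obtain ⟨R, hR⟩ : ∃ R, m O1 b = some R := by
    rw [hb] at h2; simpa [Option.isSome_iff_exists] using h2
  obtain ⟨ha1, ha2, haU⟩ := hLU _ _ _ ha
  obtain ⟨hL1, hL2, hLU'⟩ := hLU _ _ _ hL
  obtain ⟨hb1, hb2, hbU⟩ := hLU _ _ _ hb
  obtain ⟨hR1, hR2, hRU⟩ := hLU _ _ _ hR
  have hLR : le L R := by
    apply hLU'
    · exact haU R hR1 (hle_trans _ _ _ hb1 hR2)
    · exact hle_trans _ _ _ hb2 hR2
  have hRL : le R L := by
    apply hRU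
    · exact hle_trans _ _ _ ha1 hL1
    · exact hbU L (hle_trans _ _ _ ha2 hL1) hL2
  rw [ha, hb]
  simp only [Option.bind_some, hL, hR]
  exact congrArg some (hle_antisymm _ _ hLR hRL)
end

section
/- Let ∼ be reflexive and symmetric and ⪯ a partial order on an ontology merging system (𝔒, ∼, ⊔) such that defined merges are least upper bounds for ⪯ and ⪯ is compatible with ∼ and ⊔ on both sides. Then ⪯ equals the natural order: O1 ⪯ O2 if and only if O1 ∼ O2, O2 ∼ O1, and O1⊔O2 = O2⊔O1 = O2. -/
/-- If defined merges are least upper bounds for a partial order compatible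
with aligning and merging on both sides, then the partial order coincides
with the natural order given by merging. -/
theorem stmt_8 {α : Type*} (sim : α → α → Prop) (m : α → α → Option α) (le : α → α → Prop)
    (hdef : ∀ O1 O2 : α, (m O1 O2).isSome ↔ sim O1 O2)
    (hrefl : ∀ O : α, sim O O)
    (hsymm : ∀ O1 O2 : α, sim O1 O2 → sim O2 O1)
    (hle_refl : ∀ O : α, le O O)
    (hle_antisymm : ∀ O1 O2 : α, le O1 O2 → le O2 O1 → O1 = O2)
    (hle_trans : ∀ O1 O2 O3 : α, le O1 O2 → le O2 O3 → le O1 O3)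
    (hLU : ∀ O1 O2 O3 : α, m O1 O2 = some O3 →
      le O1 O3 ∧ le O2 O3 ∧ ∀ O : α, le O1 O → le O2 O → le O3 O)
    (hCPl : ∀ O1 O2 O : α, le O1 O2 → sim O O1 →
      sim O O2 ∧ ∀ x y : α, m O O1 = some x → m O O2 = some y → le x y)
    (hCPr : ∀ O1 O2 O : α, le O1 O2 → sim O1 O →
      sim O2 O ∧ ∀ x y : α, m O1 O = some x → m O2 O = some y → le x y) :
    ∀ O1 O2 : α, le O1 O2 ↔
      (sim O1 O2 ∧ sim O2 O1 ∧ m O1 O2 = some O2 ∧ m O2 O1 = some O2) := by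
  intro O1 O2
  constructor
  · intro h
    have hs12 : sim O1 O2 := (hCPl O1 O2 O1 h (hrefl O1)).1
    have hs21 : sim O2 O1 := hsymm _ _ hs12
    obtain ⟨x, hx⟩ := Option.isSome_iff_exists.mp ((hdef O1 O2).mpr hs12)
    obtain ⟨y, hy⟩ := Option.isSome_iff_exists.mp ((hdef O2 O1).mpr hs21)
    obtain ⟨h1x, h2x, hxl⟩ := hLU _ _ _ hx
    obtain ⟨h2y, h1y, hyl⟩ := hLU _ _ _ hy
    have hx2 : x = O2 := hle_antisymm _ _ (hxl O2 h (hle_refl O2)) h2x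
    have hy2 : y = O2 := hle_antisymm _ _ (hyl O2 (hle_refl O2) h) h2y
    exact ⟨hs12, hs21, hx2 ▸ hx, hy2 ▸ hy⟩
  · rintro ⟨_, _, h12, _⟩
    exact (hLU _ _ _ h12).1
end
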